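/- Let k, k₀ : [0, ∞) → ℝ be continuous with k(s) ≤ 0 for all s, k₀ non-increasing with k₀(s) < 0 for all s, and let F, F₀ be the solutions of F'' + kF = 0 and F₀'' + k₀F₀ = 0 respectively, both with value 0 and derivative 1 at 0. Assume the function φ(s) = |k(s) − k₀(s)|/√(−k₀(s)) is integrable on [0, ∞) and set C = (π/2)·∫₀^∞ φ(t) dt. Then e^{−C} ≤ F(s)/F₀(s) ≤ e^{C} for all s > 0. -/

import Mathlib

/-!
Write `G = F F₀` and `W = F' F₀ - F F₀'`. Then `(log (F / F₀))' = W / G`, `W' = (k₀ - k) G` and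
`W 0 = 0`, so integrating by parts `log (F / F₀) s = ∫₀ˢ (k₀ - k) t · G t ∫ₜˢ G⁻¹ dt`.
Since `k ≤ 0`, `F` is nondecreasing; since `k₀ ≤ k₀ t` on `[t, ∞)`, Sturm comparison gives
`F₀ σ ≥ F₀ t · cosh (√(-k₀ t) (σ - t))`. Hence `G t ∫ₜˢ G⁻¹ ≤ ∫₀^∞ sech (√(-k₀ t) u) du
= (π/2) / √(-k₀ t)`, and `|log (F / F₀) s| ≤ (π/2) ∫ φ`. As `G⁻¹` is not integrable at `0`, the
integration by parts is done on `[ε, s]`, where `|W ε| = O(ε G ε)`, and then `ε → 0`.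
-/

open Set Real Filter Topology MeasureTheory

lemma monotoneOn_of_hasDerivWithinAt_of_subset {f f' : ℝ → ℝ} {s D : Set ℝ} (hD : Convex ℝ D)
    (hDs : D ⊆ s) (hf : ∀ x ∈ D, HasDerivWithinAt f (f' x) s x)
    (hf' : ∀ x ∈ interior D, 0 ≤ f' x) : MonotoneOn f D :=
  monotoneOn_of_hasDerivWithinAt_nonneg hD (fun x hx => ((hf x hx).mono hDs).continuousWithinAt)
    (fun x hx => (hf x (interior_subset hx)).mono (interior_subset.trans hDs)) hf'

structure IsJacobiSolution (κ f f' f'' : ℝ → ℝ) : Prop where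
  hasDerivWithinAt : ∀ x ∈ Ici (0 : ℝ), HasDerivWithinAt f (f' x) (Ici 0) x
  hasDerivWithinAt_deriv : ∀ x ∈ Ici (0 : ℝ), HasDerivWithinAt f' (f'' x) (Ici 0) x
  ode : ∀ x ∈ Ici (0 : ℝ), f'' x + κ x * f x = 0

structure IsNormalJacobiSolution (κ f f' f'' : ℝ → ℝ) : Prop
    extends IsJacobiSolution κ f f' f'' where
  apply_zero : f 0 = 0
  deriv_zero : f' 0 = 1

namespace IsJacobiSolution

variable {κ f f' f'' : ℝ → ℝ}

lemma continuousOn (hf : IsJacobiSolution κ f f' f'') : ContinuousOn f (Ici 0) :=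
  fun x hx => (hf.hasDerivWithinAt x hx).continuousWithinAt

lemma continuousOn_deriv (hf : IsJacobiSolution κ f f' f'') : ContinuousOn f' (Ici 0) :=
  fun x hx => (hf.hasDerivWithinAt_deriv x hx).continuousWithinAt

lemma hasDerivWithinAt_wronskian {κ₀ g g' g'' : ℝ → ℝ} (hf : IsJacobiSolution κ f f' f'')
    (hg : IsJacobiSolution κ₀ g g' g'') {x : ℝ} (hx : x ∈ Ici (0 : ℝ)) :
    HasDerivWithinAt (fun x => f' x * g x - f x * g' x) ((κ₀ x - κ x) * (f x * g x)) (Ici 0) x :=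
  (((hf.hasDerivWithinAt_deriv x hx).mul (hg.hasDerivWithinAt x hx)).sub
    ((hf.hasDerivWithinAt x hx).mul (hg.hasDerivWithinAt_deriv x hx))).congr_deriv
    (by linear_combination g x * hf.ode x hx - f x * hg.ode x hx)

end IsJacobiSolution

namespace IsNormalJacobiSolution

variable {κ f f' f'' : ℝ → ℝ}

/-- Real induction on `{x | 0 ≤ f x ∧ 1 ≤ f' x}`: to the right of such a point `f' > 0`, so `f`
stays nonnegative, so `f'' = -κ f ≥ 0` and `f'` stays `≥ 1`. -/
lemma nonneg_and_one_le_deriv (hf : IsNormalJacobiSolution κ f f' f'')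
    (hκ : ∀ x ∈ Ici (0 : ℝ), κ x ≤ 0) {x : ℝ} (hx : 0 ≤ x) : 0 ≤ f x ∧ 1 ≤ f' x := by
  set S := f ⁻¹' Ici 0 ∩ f' ⁻¹' Ici 1
  have hIcc : Icc 0 x ⊆ Ici (0 : ℝ) := fun y hy => hy.1
  have hclosed : IsClosed (S ∩ Icc 0 x) := by
    rw [inter_inter_distrib_right, inter_comm (f ⁻¹' _), inter_comm (f' ⁻¹' _)]
    exact ((hf.continuousOn.mono hIcc).preimage_isClosed_of_isClosed isClosed_Icc
      isClosed_Ici).inter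
      ((hf.continuousOn_deriv.mono hIcc).preimage_isClosed_of_isClosed isClosed_Icc isClosed_Ici)
  have hstep : ∀ y ∈ S ∩ Ico 0 x, S ∈ 𝓝[>] y := by
    rintro y ⟨⟨hfy : 0 ≤ f y, hf'y : 1 ≤ f' y⟩, hy0, -⟩
    have hpos : ∀ᶠ z in 𝓝[≥] y, 0 < f' z :=
      ((hf.continuousOn_deriv y hy0).mono (Ici_subset_Ici.2 hy0)).eventually
        (lt_mem_nhds (by linarith))
    obtain ⟨c, hyc, hc⟩ := (nhdsGE_basis y).eventually_iff.1 hpos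
    have hsub : Icc y c ⊆ Ici (0 : ℝ) := fun z hz => hy0.trans hz.1
    have hfmono : MonotoneOn f (Icc y c) :=
      monotoneOn_of_hasDerivWithinAt_of_subset (convex_Icc y c) hsub
        (fun z hz => hf.hasDerivWithinAt z (hsub hz))
        fun z hz => (hc (Ioo_subset_Ico_self (by rwa [interior_Icc] at hz))).le
    have hfnonneg : ∀ z ∈ Icc y c, 0 ≤ f z := fun z hz =>
      hfy.trans (hfmono (left_mem_Icc.2 hyc.le) hz hz.1)
    have hf'mono : MonotoneOn f' (Icc y c) :=
      monotoneOn_of_hasDerivWithinAt_of_subset (convex_Icc y c) hsub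
        (fun z hz => hf.hasDerivWithinAt_deriv z (hsub hz)) fun z hz => by
          rw [interior_Icc] at hz
          have hz' := Ioo_subset_Icc_self hz
          nlinarith [hf.ode z (hsub hz'), hκ z (hsub hz'), hfnonneg z hz']
    filter_upwards [Ioo_mem_nhdsGT hyc] with z hz
    exact ⟨hfnonneg z (Ioo_subset_Icc_self hz),
      hf'y.trans (hf'mono (left_mem_Icc.2 hyc.le) (Ioo_subset_Icc_self hz) hz.1.le)⟩
  exact hclosed.Icc_subset_of_forall_mem_nhdsWithin
    ⟨hf.apply_zero.ge, hf.deriv_zero.ge⟩ hstep (right_mem_Icc.2 hx)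

lemma monotoneOn (hf : IsNormalJacobiSolution κ f f' f'') (hκ : ∀ x ∈ Ici (0 : ℝ), κ x ≤ 0) :
    MonotoneOn f (Ici 0) :=
  monotoneOn_of_hasDerivWithinAt_of_subset (convex_Ici 0) subset_rfl hf.hasDerivWithinAt
    fun _ hx => zero_le_one.trans (hf.nonneg_and_one_le_deriv hκ (interior_subset hx)).2

lemma self_le (hf : IsNormalJacobiSolution κ f f' f'') (hκ : ∀ x ∈ Ici (0 : ℝ), κ x ≤ 0) {x : ℝ}
    (hx : 0 ≤ x) : x ≤ f x := by
  have hmono : MonotoneOn (fun y => f y - y) (Ici 0) :=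
    monotoneOn_of_hasDerivWithinAt_of_subset (convex_Ici 0) subset_rfl
      (fun y hy => (hf.hasDerivWithinAt y hy).sub (hasDerivWithinAt_id y _)) fun y hy =>
        sub_nonneg.2 (hf.nonneg_and_one_le_deriv hκ (interior_subset hy)).2
  simpa [hf.apply_zero] using hmono self_mem_Ici hx hx

lemma pos (hf : IsNormalJacobiSolution κ f f' f'')
    (hκ : ∀ x ∈ Ici (0 : ℝ), κ x ≤ 0) {x : ℝ} (hx : 0 < x) : 0 < f x :=
  hx.trans_le (hf.self_le hκ hx.le)

/-- Sturm comparison with `cosh (a (x - t))`, which solves the Jacobi equation with the constant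
curvature `-a² = κ t ≥ κ` on `[t, σ]`: their Wronskian is nondecreasing from `f' t ≥ 0`, hence so
is their quotient. -/
lemma mul_cosh_le (hf : IsNormalJacobiSolution κ f f' f'') (hκ : ∀ x ∈ Ici (0 : ℝ), κ x ≤ 0)
    (hanti : AntitoneOn κ (Ici 0)) {t σ : ℝ} (ht : 0 ≤ t) (htσ : t ≤ σ) :
    f t * cosh (√(-κ t) * (σ - t)) ≤ f σ := by
  set a := √(-κ t)
  have ha : a ^ 2 = -κ t := sq_sqrt (neg_nonneg.2 (hκ t ht))
  set c := fun x => cosh (a * (x - t))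
  set c' := fun x => a * sinh (a * (x - t))
  have hlin (x : ℝ) : HasDerivAt (fun x => a * (x - t)) a x := by
    simpa using ((hasDerivAt_id x).sub_const t).const_mul a
  have hc (x : ℝ) : HasDerivAt c (c' x) x := by
    simpa [c, c', mul_comm, Function.comp_def] using (hasDerivAt_cosh _).comp x (hlin x)
  have hc' (x : ℝ) : HasDerivAt c' (a ^ 2 * c x) x := by
    simpa [c, c', mul_comm, mul_assoc, pow_two] using
      ((hasDerivAt_sinh _).comp x (hlin x)).const_mul a
  have hsub : Icc t σ ⊆ Ici (0 : ℝ) := fun x hx => ht.trans hx.1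
  have hw : MonotoneOn (fun x => f' x * c x - f x * c' x) (Icc t σ) := by
    refine monotoneOn_of_hasDerivWithinAt_of_subset (f' := fun x => (-κ x - a ^ 2) * (f x * c x))
      (convex_Icc t σ) hsub (fun x hx => ?_) fun x hx => ?_
    · refine (((hf.hasDerivWithinAt_deriv x (hsub hx)).mul (hc x).hasDerivWithinAt).sub
        ((hf.hasDerivWithinAt x (hsub hx)).mul (hc' x).hasDerivWithinAt)).congr_deriv ?_
      linear_combination c x * hf.ode x (hsub hx)
    · rw [interior_Icc] at hx
      have hx' := Ioo_subset_Icc_self hx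
      have hκx : κ x ≤ κ t := hanti ht (hsub hx') hx.1.le
      exact mul_nonneg (by linarith) (mul_nonneg (hf.nonneg_and_one_le_deriv hκ (hsub hx')).1
        (cosh_pos _).le)
  have hquot : MonotoneOn (fun x => f x / c x) (Icc t σ) := by
    refine monotoneOn_of_hasDerivWithinAt_of_subset
      (f' := fun x => (f' x * c x - f x * c' x) / c x ^ 2) (convex_Icc t σ) hsub
      (fun x hx => (hf.hasDerivWithinAt x (hsub hx)).div (hc x).hasDerivWithinAt (cosh_pos _).ne')
      fun x hx => ?_
    have hx' := interior_subset hx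
    have hwt := hw (left_mem_Icc.2 htσ) hx' hx'.1
    have hf't := (hf.nonneg_and_one_le_deriv hκ ht).2
    simp only [c, c', sub_self, mul_zero, cosh_zero, sinh_zero, mul_one] at hwt
    exact div_nonneg (by linarith) (sq_nonneg _)
  have := hquot (left_mem_Icc.2 htσ) (right_mem_Icc.2 htσ) htσ
  simpa [c, le_div_iff₀ (cosh_pos _)] using this

end IsNormalJacobiSolution

lemma continuous_inv_cosh_mul_sub (a t : ℝ) : Continuous fun σ => (cosh (a * (σ - t)))⁻¹ :=
  (continuous_cosh.comp (continuous_const.mul (continuous_id.sub continuous_const))).inv₀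
    fun _ => (cosh_pos _).ne'

lemma integral_inv_cosh_le {a : ℝ} (t s : ℝ) (ha : 0 < a) :
    ∫ σ in t..s, (cosh (a * (σ - t)))⁻¹ ≤ π / 2 / a := by
  have hlin (x : ℝ) : HasDerivAt (fun x => a * (x - t)) a x := by
    simpa using ((hasDerivAt_id x).sub_const t).const_mul a
  have hprim (x : ℝ) : HasDerivAt (fun σ => arctan (sinh (a * (σ - t))) / a)
      (cosh (a * (x - t)))⁻¹ x := by
    refine (((hasDerivAt_sinh _).comp x (hlin x)).arctan.div_const a).congr_deriv ?_
    have := cosh_pos (a * (x - t))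
    simp only [Function.comp_apply]
    field_simp
    linear_combination cosh_sq (a * (x - t))
  rw [intervalIntegral.integral_eq_sub_of_hasDerivAt (fun x _ => hprim x)
    ((continuous_inv_cosh_mul_sub a t).intervalIntegrable _ _)]
  simp only [sub_self, mul_zero, sinh_zero, arctan_zero, zero_div, sub_zero]
  gcongr
  exact (arctan_lt_pi_div_two _).le

lemma mul_integral_inv_le_of_mul_cosh_le {G : ℝ → ℝ} {a t s : ℝ} (ha : 0 < a) (hts : t ≤ s)
    (hGt : 0 < G t) (hG : ∀ σ ∈ Icc t s, G t * cosh (a * (σ - t)) ≤ G σ) :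
    G t * ∫ σ in t..s, (G σ)⁻¹ ≤ π / 2 / a := by
  by_cases hint : IntervalIntegrable (fun σ => (G σ)⁻¹) volume t s
  · rw [← intervalIntegral.integral_const_mul]
    refine (intervalIntegral.integral_mono_on hts (hint.const_mul _)
      ((continuous_inv_cosh_mul_sub a t).intervalIntegrable _ _) fun σ hσ => ?_).trans
      (integral_inv_cosh_le t s ha)
    have hc := cosh_pos (a * (σ - t))
    rw [← div_eq_mul_inv, div_le_iff₀ ((mul_pos hGt hc).trans_le (hG σ hσ)), inv_mul_eq_div,
      le_div_iff₀ hc]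
    exact hG σ hσ
  · rw [intervalIntegral.integral_undef hint, mul_zero]
    positivity

lemma HasDerivAt.log_div {f g : ℝ → ℝ} {a b x : ℝ} (hf : HasDerivAt f a x) (hg : HasDerivAt g b x)
    (hfx : f x ≠ 0) (hgx : g x ≠ 0) :
    HasDerivAt (fun y => Real.log (f y / g y)) ((a * g x - f x * b) * (f x * g x)⁻¹) x := by
  refine ((hf.div hg hgx).log (div_ne_zero hfx hgx)).congr_deriv ?_
  simp only [Pi.div_apply]
  field_simp

lemma integral_mul_eq_mul_integral_add_integral_tail {u u' g : ℝ → ℝ} {a b : ℝ} (hab : a ≤ b)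
    (hu : ContinuousOn u (Icc a b)) (hu' : ∀ x ∈ Ioo a b, HasDerivAt u (u' x) x)
    (hu'i : IntervalIntegrable u' volume a b) (hg : ContinuousOn g (Icc a b)) :
    ∫ x in a..b, u x * g x = u a * (∫ x in a..b, g x) + ∫ x in a..b, u' x * ∫ y in x..b, g y := by
  have hgi : IntervalIntegrable g volume a b := hg.intervalIntegrable_of_Icc hab
  have hv : ContinuousOn (fun x => ∫ y in b..x, g y) (Icc a b) := by
    have := intervalIntegral.continuousOn_primitive_interval' hgi.symm left_mem_uIcc
    rwa [uIcc_of_ge hab] at this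
  have hv' (x : ℝ) (hx : x ∈ Ioo a b) : HasDerivAt (fun x => ∫ y in b..x, g y) (g x) x :=
    intervalIntegral.integral_hasDerivAt_right
      (hgi.mono_set (uIcc_subset_uIcc (mem_uIcc_of_le hx.1.le hx.2.le) right_mem_uIcc)).symm
      ((hg.mono Ioo_subset_Icc_self).stronglyMeasurableAtFilter isOpen_Ioo x hx)
      ((hg x (Ioo_subset_Icc_self hx)).continuousAt (Icc_mem_nhds hx.1 hx.2))
  rw [intervalIntegral.integral_mul_deriv_eq_deriv_mul_of_hasDerivAt (by rwa [uIcc_of_le hab])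
    (by rwa [uIcc_of_le hab]) (by simpa [hab] using hu') (by simpa [hab] using hv') hu'i hgi]
  simp only [intervalIntegral.integral_same, mul_zero, zero_sub, mul_neg,
    intervalIntegral.integral_symm (b := b), intervalIntegral.integral_neg]
  ring

lemma tendsto_div_nhdsGT_zero {f g : ℝ → ℝ} {a b : ℝ} (hf : HasDerivWithinAt f a (Ici 0) 0)
    (hg : HasDerivWithinAt g b (Ici 0) 0) (hf0 : f 0 = 0) (hg0 : g 0 = 0) (hb : b ≠ 0) :
    Tendsto (fun x => f x / g x) (𝓝[>] 0) (𝓝 (a / b)) := by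
  have hslope {h : ℝ → ℝ} {c : ℝ} (hh : HasDerivWithinAt h c (Ici 0) 0) (hh0 : h 0 = 0) :
      Tendsto (fun x => h x / x) (𝓝[>] 0) (𝓝 c) := by
    have := hasDerivWithinAt_iff_tendsto_slope.1 hh
    rw [Ici_sdiff_left] at this
    refine this.congr fun x => ?_
    simp [slope_def_field, hh0]
  refine ((hslope hf hf0).div (hslope hg hg0) hb).congr' ?_
  filter_upwards [self_mem_nhdsWithin] with x (hx : 0 < x)
  have := hx.ne'
  simp only [Pi.div_apply]
  field_simp

section Comparison

variable {k k₀ F F' F'' F₀ F₀' F₀'' : ℝ → ℝ}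

lemma mul_integral_inv_mul_le (hF : IsNormalJacobiSolution k F F' F'')
    (hF₀ : IsNormalJacobiSolution k₀ F₀ F₀' F₀'') (hk : ∀ x ∈ Ici (0 : ℝ), k x ≤ 0)
    (hk₀ : ∀ x ∈ Ici (0 : ℝ), k₀ x < 0) (hk₀_anti : AntitoneOn k₀ (Ici 0)) {t s : ℝ}
    (ht : 0 < t) (hts : t ≤ s) :
    F t * F₀ t * ∫ σ in t..s, (F σ * F₀ σ)⁻¹ ≤ π / 2 / √(-k₀ t) := by
  have hk₀' : ∀ x ∈ Ici (0 : ℝ), k₀ x ≤ 0 := fun x hx => (hk₀ x hx).le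
  refine mul_integral_inv_le_of_mul_cosh_le (G := fun σ => F σ * F₀ σ)
    (sqrt_pos.2 (neg_pos.2 (hk₀ t ht.le))) hts (mul_pos (hF.pos hk ht) (hF₀.pos hk₀' ht))
    fun σ hσ => ?_
  calc F t * F₀ t * cosh (√(-k₀ t) * (σ - t)) = F t * (F₀ t * cosh (√(-k₀ t) * (σ - t))) := by
        ring
    _ ≤ F t * F₀ σ := mul_le_mul_of_nonneg_left (hF₀.mul_cosh_le hk₀' hk₀_anti ht.le hσ.1)
        (hF.pos hk ht).le
    _ ≤ F σ * F₀ σ := mul_le_mul_of_nonneg_right (hF.monotoneOn hk ht.le (ht.le.trans hσ.1) hσ.1)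
        (hF₀.pos hk₀' (ht.trans_le hσ.1)).le

lemma abs_wronskian_le (hF : IsNormalJacobiSolution k F F' F'')
    (hF₀ : IsNormalJacobiSolution k₀ F₀ F₀' F₀'') (hk : ∀ x ∈ Ici (0 : ℝ), k x ≤ 0)
    (hk₀ : ∀ x ∈ Ici (0 : ℝ), k₀ x ≤ 0) {ε Q : ℝ} (hε : 0 ≤ ε)
    (hQ : ∀ x ∈ Icc 0 ε, |k x - k₀ x| ≤ Q) :
    |F' ε * F₀ ε - F ε * F₀' ε| ≤ Q * (F ε * F₀ ε) * ε := by
  have hsub : Icc 0 ε ⊆ Ici (0 : ℝ) := fun x hx => hx.1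
  have hG (x : ℝ) (hx : x ∈ Icc 0 ε) : 0 ≤ F x * F₀ x ∧ F x * F₀ x ≤ F ε * F₀ ε :=
    ⟨mul_nonneg (hF.nonneg_and_one_le_deriv hk hx.1).1 (hF₀.nonneg_and_one_le_deriv hk₀ hx.1).1,
      mul_le_mul (hF.monotoneOn hk hx.1 hε hx.2) (hF₀.monotoneOn hk₀ hx.1 hε hx.2)
        (hF₀.nonneg_and_one_le_deriv hk₀ hx.1).1 (hF.nonneg_and_one_le_deriv hk hε).1⟩
  have := (convex_Icc 0 ε).norm_image_sub_le_of_norm_hasDerivWithin_le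
    (fun x hx => (hF.hasDerivWithinAt_wronskian hF₀.toIsJacobiSolution (hsub hx)).mono hsub)
    (fun x hx => by
      rw [norm_mul, Real.norm_eq_abs, Real.norm_eq_abs, abs_sub_comm, abs_of_nonneg (hG x hx).1]
      exact mul_le_mul (hQ x hx) (hG x hx).2 (hG x hx).1 ((abs_nonneg _).trans (hQ x hx)))
    (left_mem_Icc.2 hε) (right_mem_Icc.2 hε)
  simpa [hF.apply_zero, hF₀.apply_zero, abs_of_nonneg hε] using this

lemma log_div_sub_log_div_eq (hF : IsNormalJacobiSolution k F F' F'')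
    (hF₀ : IsNormalJacobiSolution k₀ F₀ F₀' F₀'') (hk_cont : ContinuousOn k (Ici 0))
    (hk₀_cont : ContinuousOn k₀ (Ici 0)) (hk : ∀ x ∈ Ici (0 : ℝ), k x ≤ 0)
    (hk₀ : ∀ x ∈ Ici (0 : ℝ), k₀ x ≤ 0) {ε s : ℝ} (hε : 0 < ε) (hεs : ε ≤ s) :
    log (F s / F₀ s) - log (F ε / F₀ ε) =
      (F' ε * F₀ ε - F ε * F₀' ε) * (∫ x in ε..s, (F x * F₀ x)⁻¹) +
        ∫ x in ε..s, (k₀ x - k x) * (F x * F₀ x) * ∫ y in x..s, (F y * F₀ y)⁻¹ := by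
  have hpos {x : ℝ} (hx : x ∈ Icc ε s) : 0 < x := hε.trans_le hx.1
  have hnhds {x : ℝ} (hx : x ∈ Icc ε s) : Ici (0 : ℝ) ∈ 𝓝 x := Ici_mem_nhds (hpos hx)
  have hW (x : ℝ) (hx : x ∈ Icc ε s) : HasDerivAt (fun x => F' x * F₀ x - F x * F₀' x)
      ((k₀ x - k x) * (F x * F₀ x)) x :=
    (hF.hasDerivWithinAt_wronskian hF₀.toIsJacobiSolution (hpos hx).le).hasDerivAt (hnhds hx)
  have hL (x : ℝ) (hx : x ∈ uIcc ε s) : HasDerivAt (fun x => log (F x / F₀ x))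
      ((F' x * F₀ x - F x * F₀' x) * (F x * F₀ x)⁻¹) x := by
    rw [uIcc_of_le hεs] at hx
    exact ((hF.hasDerivWithinAt x (hpos hx).le).hasDerivAt (hnhds hx)).log_div
      ((hF₀.hasDerivWithinAt x (hpos hx).le).hasDerivAt (hnhds hx)) (hF.pos hk (hpos hx)).ne'
      (hF₀.pos hk₀ (hpos hx)).ne'
  have hGc : ContinuousOn (fun x => (F x * F₀ x)⁻¹) (Icc ε s) :=
    ((hF.continuousOn.mul hF₀.continuousOn).mono fun x hx => (hpos hx).le).inv₀
      fun x hx => (mul_pos (hF.pos hk (hpos hx)) (hF₀.pos hk₀ (hpos hx))).ne'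
  have hWc : ContinuousOn (fun x => F' x * F₀ x - F x * F₀' x) (Icc ε s) :=
    fun x hx => (hW x hx).continuousAt.continuousWithinAt
  rw [← intervalIntegral.integral_eq_sub_of_hasDerivAt hL
    ((hWc.mul hGc).intervalIntegrable_of_Icc hεs)]
  exact integral_mul_eq_mul_integral_add_integral_tail hεs hWc
    (fun x hx => hW x (Ioo_subset_Icc_self hx))
    ((((hk₀_cont.sub hk_cont).mul (hF.continuousOn.mul hF₀.continuousOn)).mono
      fun x hx => (hpos hx).le).intervalIntegrable_of_Icc hεs) hGc

lemma abs_log_div_sub_log_div_le (hF : IsNormalJacobiSolution k F F' F'')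
    (hF₀ : IsNormalJacobiSolution k₀ F₀ F₀' F₀'') (hk_cont : ContinuousOn k (Ici 0))
    (hk₀_cont : ContinuousOn k₀ (Ici 0)) (hk : ∀ x ∈ Ici (0 : ℝ), k x ≤ 0)
    (hk₀ : ∀ x ∈ Ici (0 : ℝ), k₀ x < 0) (hk₀_anti : AntitoneOn k₀ (Ici 0)) {ε s : ℝ}
    (hε : 0 < ε) (hεs : ε ≤ s) :
    |log (F s / F₀ s) - log (F ε / F₀ ε)| ≤
      |F' ε * F₀ ε - F ε * F₀' ε| * (∫ x in ε..s, (F x * F₀ x)⁻¹) +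
        π / 2 * ∫ x in ε..s, |k x - k₀ x| / √(-k₀ x) := by
  have hk₀' : ∀ x ∈ Ici (0 : ℝ), k₀ x ≤ 0 := fun x hx => (hk₀ x hx).le
  have hG {x : ℝ} (hx : x ∈ Ioi (0 : ℝ)) : 0 < F x * F₀ x :=
    mul_pos (hF.pos hk hx) (hF₀.pos hk₀' hx)
  have hintegral {t : ℝ} (ht : 0 < t) (hts : t ≤ s) : 0 ≤ ∫ σ in t..s, (F σ * F₀ σ)⁻¹ :=
    intervalIntegral.integral_nonneg hts fun σ hσ => (inv_pos.2 (hG (ht.trans_le hσ.1))).le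
  have hφc : ContinuousOn (fun x => |k x - k₀ x| / √(-k₀ x)) (Icc ε s) :=
    ((hk_cont.sub hk₀_cont).abs.div hk₀_cont.neg.sqrt fun x hx =>
      (sqrt_pos.2 (neg_pos.2 (hk₀ x hx))).ne').mono fun x hx => hε.le.trans hx.1
  rw [log_div_sub_log_div_eq hF hF₀ hk_cont hk₀_cont hk hk₀' hε hεs]
  refine (abs_add_le _ _).trans (add_le_add ?_ ?_)
  · rw [abs_mul, abs_of_nonneg (hintegral hε hεs)]
  rw [← intervalIntegral.integral_const_mul, ← Real.norm_eq_abs]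
  refine intervalIntegral.norm_integral_le_of_norm_le hεs (ae_of_all _ fun t ⟨hεt, hts⟩ => ?_)
    ((hφc.intervalIntegrable_of_Icc hεs).const_mul _)
  have ht : 0 < t := hε.trans hεt
  calc ‖(k₀ t - k t) * (F t * F₀ t) * ∫ σ in t..s, (F σ * F₀ σ)⁻¹‖
      = |k t - k₀ t| * (F t * F₀ t * ∫ σ in t..s, (F σ * F₀ σ)⁻¹) := by
        rw [Real.norm_eq_abs, mul_assoc, abs_mul, abs_sub_comm,
          abs_of_nonneg (mul_nonneg (hG ht).le (hintegral ht hts))]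
    _ ≤ |k t - k₀ t| * (π / 2 / √(-k₀ t)) := mul_le_mul_of_nonneg_left
        (mul_integral_inv_mul_le hF hF₀ hk hk₀ hk₀_anti ht hts) (abs_nonneg _)
    _ = π / 2 * (|k t - k₀ t| / √(-k₀ t)) := by ring

lemma abs_log_div_le_abs_log_div_add (hF : IsNormalJacobiSolution k F F' F'')
    (hF₀ : IsNormalJacobiSolution k₀ F₀ F₀' F₀'') (hk_cont : ContinuousOn k (Ici 0))
    (hk₀_cont : ContinuousOn k₀ (Ici 0)) (hk : ∀ x ∈ Ici (0 : ℝ), k x ≤ 0)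
    (hk₀ : ∀ x ∈ Ici (0 : ℝ), k₀ x < 0) (hk₀_anti : AntitoneOn k₀ (Ici 0))
    (hφ : IntegrableOn (fun x => |k x - k₀ x| / √(-k₀ x)) (Ici 0)) {Q ε s : ℝ} (hε : 0 < ε)
    (hεs : ε ≤ s) (hQ : ∀ x ∈ Icc 0 ε, |k x - k₀ x| ≤ Q) :
    |log (F s / F₀ s)| ≤ |log (F ε / F₀ ε)| + Q * ε * (π / 2 / √(-k₀ 0)) +
      π / 2 * ∫ x in Ici 0, |k x - k₀ x| / √(-k₀ x) := by
  have hk₀' : ∀ x ∈ Ici (0 : ℝ), k₀ x ≤ 0 := fun x hx => (hk₀ x hx).le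
  have hI : 0 ≤ ∫ x in ε..s, (F x * F₀ x)⁻¹ := intervalIntegral.integral_nonneg hεs fun x hx =>
    (inv_pos.2 (mul_pos (hF.pos hk (hε.trans_le hx.1)) (hF₀.pos hk₀' (hε.trans_le hx.1)))).le
  have hsqrt : π / 2 / √(-k₀ ε) ≤ π / 2 / √(-k₀ 0) :=
    div_le_div_of_nonneg_left (by positivity) (sqrt_pos.2 (neg_pos.2 (hk₀ 0 self_mem_Ici)))
      (sqrt_le_sqrt (neg_le_neg (hk₀_anti self_mem_Ici hε.le hε.le)))
  have hQ0 : 0 ≤ Q := (abs_nonneg _).trans (hQ 0 (left_mem_Icc.2 hε.le))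
  have hWronskian : |F' ε * F₀ ε - F ε * F₀' ε| * (∫ x in ε..s, (F x * F₀ x)⁻¹) ≤
      Q * ε * (π / 2 / √(-k₀ 0)) :=
    calc _ ≤ Q * (F ε * F₀ ε) * ε * ∫ x in ε..s, (F x * F₀ x)⁻¹ :=
          mul_le_mul_of_nonneg_right (abs_wronskian_le hF hF₀ hk hk₀' hε.le hQ) hI
      _ = Q * ε * (F ε * F₀ ε * ∫ x in ε..s, (F x * F₀ x)⁻¹) := by ring
      _ ≤ Q * ε * (π / 2 / √(-k₀ 0)) := mul_le_mul_of_nonneg_left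
          ((mul_integral_inv_mul_le hF hF₀ hk hk₀ hk₀_anti hε hεs).trans hsqrt) (by positivity)
  have htail : π / 2 * ∫ x in ε..s, |k x - k₀ x| / √(-k₀ x) ≤
      π / 2 * ∫ x in Ici 0, |k x - k₀ x| / √(-k₀ x) := by
    rw [intervalIntegral.integral_of_le hεs]
    exact mul_le_mul_of_nonneg_left (setIntegral_mono_set hφ (ae_of_all _ fun x => by positivity)
      (LE.le.eventuallyLE fun x (hx : x ∈ Ioc ε s) => hε.le.trans hx.1.le)) (by positivity)
  have := abs_log_div_sub_log_div_le hF hF₀ hk_cont hk₀_cont hk hk₀ hk₀_anti hε hεs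
  have := abs_sub_abs_le_abs_sub (log (F s / F₀ s)) (log (F ε / F₀ ε))
  linarith

lemma abs_log_div_le (hF : IsNormalJacobiSolution k F F' F'')
    (hF₀ : IsNormalJacobiSolution k₀ F₀ F₀' F₀'') (hk_cont : ContinuousOn k (Ici 0))
    (hk₀_cont : ContinuousOn k₀ (Ici 0)) (hk : ∀ x ∈ Ici (0 : ℝ), k x ≤ 0)
    (hk₀ : ∀ x ∈ Ici (0 : ℝ), k₀ x < 0) (hk₀_anti : AntitoneOn k₀ (Ici 0))
    (hφ : IntegrableOn (fun x => |k x - k₀ x| / √(-k₀ x)) (Ici 0)) {s : ℝ} (hs : 0 < s) :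
    |log (F s / F₀ s)| ≤ π / 2 * ∫ x in Ici 0, |k x - k₀ x| / √(-k₀ x) := by
  obtain ⟨Q, hQ⟩ := isCompact_Icc.exists_bound_of_continuousOn
    ((hk_cont.sub hk₀_cont).mono (Icc_subset_Ici_self : Icc 0 s ⊆ Ici 0))
  have hratio := tendsto_div_nhdsGT_zero (hF.hasDerivWithinAt 0 self_mem_Ici)
    (hF₀.hasDerivWithinAt 0 self_mem_Ici) hF.apply_zero hF₀.apply_zero
    (hF₀.deriv_zero ▸ one_ne_zero)
  rw [hF.deriv_zero, hF₀.deriv_zero, div_one] at hratio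
  have hlog : Tendsto (fun ε => |log (F ε / F₀ ε)|) (𝓝[>] 0) (𝓝 0) := by
    simpa using ((continuousAt_log one_ne_zero).tendsto.comp hratio).abs
  have hlin : Tendsto (fun ε : ℝ => Q * ε * (π / 2 / √(-k₀ 0))) (𝓝[>] 0) (𝓝 0) := by
    simpa using ((tendsto_id.const_mul Q).mul_const (π / 2 / √(-k₀ 0))).mono_left
      (nhdsWithin_le_nhds (a := (0 : ℝ)))
  refine ge_of_tendsto (by simpa using (hlog.add hlin).add_const _) ?_
  filter_upwards [Ioo_mem_nhdsGT hs] with ε hε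
  exact abs_log_div_le_abs_log_div_add hF hF₀ hk_cont hk₀_cont hk hk₀ hk₀_anti hφ hε.1 hε.2.le
    fun x hx => hQ x ⟨hx.1, hx.2.trans hε.2.le⟩

end Comparison

theorem stmt_3_general (k k₀ F F' F'' F₀ F₀' F₀'' : ℝ → ℝ)
    (hk_cont : ContinuousOn k (Set.Ici 0))
    (hk₀_cont : ContinuousOn k₀ (Set.Ici 0))
    (hk_nonpos : ∀ s ∈ Set.Ici (0 : ℝ), k s ≤ 0)
    (hk₀_neg : ∀ s ∈ Set.Ici (0 : ℝ), k₀ s < 0)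
    (hk₀_mono : ∀ s ∈ Set.Ici (0 : ℝ), ∀ t ∈ Set.Ici (0 : ℝ), s ≤ t → k₀ t ≤ k₀ s)
    (hF' : ∀ s ∈ Set.Ici (0 : ℝ), HasDerivWithinAt F (F' s) (Set.Ici 0) s)
    (hF'' : ∀ s ∈ Set.Ici (0 : ℝ), HasDerivWithinAt F' (F'' s) (Set.Ici 0) s)
    (hODE : ∀ s ∈ Set.Ici (0 : ℝ), F'' s + k s * F s = 0)
    (hF0 : F 0 = 0) (hF'0 : F' 0 = 1)
    (hF₀' : ∀ s ∈ Set.Ici (0 : ℝ), HasDerivWithinAt F₀ (F₀' s) (Set.Ici 0) s)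
    (hF₀'' : ∀ s ∈ Set.Ici (0 : ℝ), HasDerivWithinAt F₀' (F₀'' s) (Set.Ici 0) s)
    (hODE₀ : ∀ s ∈ Set.Ici (0 : ℝ), F₀'' s + k₀ s * F₀ s = 0)
    (hF₀0 : F₀ 0 = 0) (hF₀'0 : F₀' 0 = 1)
    (φ : ℝ → ℝ) (hφ : ∀ s, φ s = |k s - k₀ s| / Real.sqrt (-(k₀ s)))
    (hφ_int : IntegrableOn φ (Set.Ici 0))
    (C : ℝ) (hC : C = (Real.pi / 2) * ∫ t in Set.Ici (0 : ℝ), φ t) :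
    ∀ s > (0 : ℝ), Real.exp (-C) ≤ F s / F₀ s ∧ F s / F₀ s ≤ Real.exp C := by
  intro s hs
  have hF : IsNormalJacobiSolution k F F' F'' := ⟨⟨hF', hF'', hODE⟩, hF0, hF'0⟩
  have hF₀ : IsNormalJacobiSolution k₀ F₀ F₀' F₀'' := ⟨⟨hF₀', hF₀'', hODE₀⟩, hF₀0, hF₀'0⟩
  obtain rfl : φ = fun x => |k x - k₀ x| / √(-k₀ x) := funext hφ
  have hpos : 0 < F s / F₀ s :=
    div_pos (hF.pos hk_nonpos hs) (hF₀.pos (fun x hx => (hk₀_neg x hx).le) hs)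
  obtain ⟨hlower, hupper⟩ := abs_le.1 <| hC ▸
    abs_log_div_le hF hF₀ hk_cont hk₀_cont hk_nonpos hk₀_neg hk₀_mono hφ_int hs
  exact ⟨(le_log_iff_exp_le hpos).1 hlower, (log_le_iff_le_exp hpos).1 hupper⟩

/-- Lemma 1 (iii): comparison of the solutions `F`, `F₀` of the Jacobi equations with
curvatures `k ≤ 0` and `k₀ < 0` (non-increasing), under the integrability of
`φ = |k - k₀|/√(-k₀)`:  `e^{-C} ≤ F/F₀ ≤ e^{C}` with `C = (π/2)∫₀^∞ φ`. -/
theorem stmt_3 (k k₀ F F' F'' F₀ F₀' F₀'' : ℝ → ℝ)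
    (hk_cont : ContinuousOn k (Set.Ici 0))
    (hk₀_cont : ContinuousOn k₀ (Set.Ici 0))
    (hk_nonpos : ∀ s ∈ Set.Ici (0 : ℝ), k s ≤ 0)
    (hk₀_neg : ∀ s ∈ Set.Ici (0 : ℝ), k₀ s < 0)
    (hk₀_mono : ∀ s ∈ Set.Ici (0 : ℝ), ∀ t ∈ Set.Ici (0 : ℝ), s ≤ t → k₀ t ≤ k₀ s)
    (hF' : ∀ s ∈ Set.Ici (0 : ℝ), HasDerivWithinAt F (F' s) (Set.Ici 0) s)
    (hF'' : ∀ s ∈ Set.Ici (0 : ℝ), HasDerivWithinAt F' (F'' s) (Set.Ici 0) s)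
    (hF''_cont : ContinuousOn F'' (Set.Ici 0))
    (hODE : ∀ s ∈ Set.Ici (0 : ℝ), F'' s + k s * F s = 0)
    (hF0 : F 0 = 0) (hF'0 : F' 0 = 1)
    (hF₀' : ∀ s ∈ Set.Ici (0 : ℝ), HasDerivWithinAt F₀ (F₀' s) (Set.Ici 0) s)
    (hF₀'' : ∀ s ∈ Set.Ici (0 : ℝ), HasDerivWithinAt F₀' (F₀'' s) (Set.Ici 0) s)
    (hF₀''_cont : ContinuousOn F₀'' (Set.Ici 0))
    (hODE₀ : ∀ s ∈ Set.Ici (0 : ℝ), F₀'' s + k₀ s * F₀ s = 0)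
    (hF₀0 : F₀ 0 = 0) (hF₀'0 : F₀' 0 = 1)
    (φ : ℝ → ℝ) (hφ : ∀ s, φ s = |k s - k₀ s| / Real.sqrt (-(k₀ s)))
    (hφ_int : IntegrableOn φ (Set.Ici 0))
    (C : ℝ) (hC : C = (Real.pi / 2) * ∫ t in Set.Ici (0 : ℝ), φ t) :
    ∀ s > (0 : ℝ), Real.exp (-C) ≤ F s / F₀ s ∧ F s / F₀ s ≤ Real.exp C :=
  stmt_3_general k k₀ F F' F'' F₀ F₀' F₀'' hk_cont hk₀_cont hk_nonpos hk₀_neg hk₀_mono hF' hF'' hODE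
    hF0 hF'0 hF₀' hF₀'' hODE₀ hF₀0 hF₀'0 φ hφ hφ_int C hC
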